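/- For a discrete vector space V over a field K and a linear endomorphism φ : V → V, the algebraic entropy ent(φ) = sup{ H(φ,U) : U ∈ B(V) } coincides with the dimension entropy ent_dim(φ) = sup{ lim_{n→∞} (1/n) dim(F + φF + ... + φ^{n-1}F) : F ≤ V finite-dimensional }. -/

import Mathlib

universe v w

open Filter Topology ENNReal Pointwise

section Defs

variable (K : Type*) [Field K]

/-- A linearly topologized `K`-vector space is linearly compact if every family of closed
linear varieties (cosets of closed subspaces) with the finite intersection property has
nonempty intersection. -/
def IsLinearlyCompact (V : Type v) [AddCommGroup V] [Module K V] [TopologicalSpace V] : Prop :=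
  ∀ {ι : Type v} (v : ι → V) (W : ι → Submodule K V),
    (∀ i, IsClosed (W i : Set V)) →
    (∀ s : Finset ι, (⋂ i ∈ s, (v i +ᵥ (W i : Set V))).Nonempty) →
    (⋂ i, (v i +ᵥ (W i : Set V))).Nonempty

/-- A topological vector space over the discrete field `K` is linearly topologized if it is
Hausdorff and has a neighborhood basis at `0` consisting of (open) linear subspaces. -/
def LinearlyTopologized (V : Type*) [AddCommGroup V] [Module K V] [TopologicalSpace V] : Prop :=
  T2Space V ∧ ∀ S ∈ nhds (0 : V), ∃ U : Submodule K V, IsOpen (U : Set V) ∧ (U : Set V) ⊆ S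

/-- A linearly topologized vector space is locally linearly compact if it admits a linearly
compact open linear subspace. -/
def LocallyLinearlyCompact (V : Type*) [AddCommGroup V] [Module K V] [TopologicalSpace V] :
    Prop :=
  LinearlyTopologized K V ∧ ∃ U : Submodule K V, IsOpen (U : Set V) ∧ IsLinearlyCompact K ↥U

/-- `B(V)`: the family of linearly compact open linear subspaces of `V`. -/
def LCO (V : Type*) [AddCommGroup V] [Module K V] [TopologicalSpace V] :
    Set (Submodule K V) :=
  {U | IsOpen (U : Set V) ∧ IsLinearlyCompact K ↥U}

variable {V : Type*} [AddCommGroup V] [Module K V]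

/-- The `n`-th partial `φ`-trajectory `U + φU + ⋯ + φ^{n-1}U`. -/
noncomputable def Traj (φ : V →ₗ[K] V) (U : Submodule K V) (n : ℕ) : Submodule K V :=
  ⨆ i ∈ Finset.range n, U.map (φ ^ i)

variable [TopologicalSpace V]

/-- The algebraic entropy of `φ` with respect to `U`:
`H(φ,U) = lim_{n→∞} (1/n) dim (T_n(φ,U)/U)`. -/
noncomputable def entH (φ : V →ₗ[K] V) (U : Submodule K V) : ℝ :=
  limUnder atTop fun n : ℕ =>
    (Module.finrank K ((Traj K φ U n).map U.mkQ) : ℝ) / n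

/-- The algebraic entropy `ent(φ) = sup { H(φ,U) : U ∈ B(V) }`, with values in `ℕ ∪ {∞}`. -/
noncomputable def ent (φ : V →ₗ[K] V) : ℝ≥0∞ :=
  ⨆ U ∈ LCO K V, ENNReal.ofReal (entH K φ U)

end Defs

section Aux

variable {K : Type*} [Field K]

lemma mem_vadd_submodule {V : Type*} [AddCommGroup V] [Module K V] {W : Submodule K V}
    {a x : V} : x ∈ a +ᵥ (W : Set V) ↔ x - a ∈ W := by
  constructor
  · rintro ⟨y, hy, rfl⟩; simpa using hy
  · intro h; exact ⟨x - a, h, by simp⟩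

lemma isLinearlyCompact_of_finiteDimensional {W : Type w} [AddCommGroup W] [Module K W]
    [TopologicalSpace W] [FiniteDimensional K W] : IsLinearlyCompact K W := by
  classical
  intro ι v Wi _hcl hfip
  have hne : (Set.range fun s : Finset ι =>
      Module.finrank K ↥(⨅ i ∈ s, Wi i)).Nonempty := ⟨_, ⟨∅, rfl⟩⟩
  obtain ⟨s₀, hs₀eq⟩ := Nat.sInf_mem hne
  have hmin : ∀ s : Finset ι, Module.finrank K ↥(⨅ i ∈ s₀, Wi i) ≤
      Module.finrank K ↥(⨅ i ∈ s, Wi i) := fun s => by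
    have h := Nat.sInf_le (Set.mem_range_self (f := fun s : Finset ι =>
      Module.finrank K ↥(⨅ i ∈ s, Wi i)) s)
    rw [← hs₀eq] at h
    exact h
  obtain ⟨x₀, hx₀⟩ := hfip s₀
  refine ⟨x₀, Set.mem_iInter.2 fun i => ?_⟩
  obtain ⟨y, hy⟩ := hfip (insert i s₀)
  have hM : (⨅ j ∈ insert i s₀, Wi j : Submodule K W) = ⨅ j ∈ s₀, Wi j := by
    refine Submodule.eq_of_le_of_finrank_le ?_ (hmin _)
    refine le_iInf₂ fun j hj => ?_
    exact biInf_le _ (Finset.mem_insert_of_mem hj)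
  have hyi : y - v i ∈ Wi i := by
    have := Set.mem_iInter₂.1 hy i (Finset.mem_insert_self i s₀)
    exact mem_vadd_submodule.1 this
  have hx₀y : x₀ - y ∈ (⨅ j ∈ s₀, Wi j : Submodule K W) := by
    refine (Submodule.mem_iInf _).2 fun j => (Submodule.mem_iInf _).2 fun hj => ?_
    have h1 := mem_vadd_submodule.1 (Set.mem_iInter₂.1 hx₀ j hj)
    have h2 := mem_vadd_submodule.1 (Set.mem_iInter₂.1 hy j (Finset.mem_insert_of_mem hj))
    simpa [sub_sub_sub_cancel_right] using Submodule.sub_mem _ h1 h2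
  have hx₀i : x₀ - y ∈ Wi i := by
    rw [← hM] at hx₀y
    exact (Submodule.mem_iInf _).1 ((Submodule.mem_iInf _).1 hx₀y i) (Finset.mem_insert_self i s₀)
  refine mem_vadd_submodule.2 ?_
  have := Submodule.add_mem _ hx₀i hyi
  simpa [sub_add_sub_cancel] using this

lemma finiteDimensional_of_isLinearlyCompact {W : Type w} [AddCommGroup W] [Module K W]
    [TopologicalSpace W] [DiscreteTopology W] (h : IsLinearlyCompact K W) :
    FiniteDimensional K W := by
  classical
  by_contra hfd
  set b := Module.Basis.ofVectorSpace K W with hb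
  have hinf : (Module.Basis.ofVectorSpaceIndex K W).Infinite := by
    intro hfin
    exact hfd (by haveI := hfin.to_subtype; exact Module.Finite.of_basis b)
  set e := hinf.natEmbedding with he
  set vv : ULift.{w} ℕ → W := fun n => ∑ k ∈ Finset.range (n.down + 1), b (e k) with hvv
  set Ws : ULift.{w} ℕ → Submodule K W :=
    fun n => Submodule.span K (b '' {j | ∀ k ≤ n.down, j ≠ e k}) with hWs
  have hkey : ∀ (n : ℕ) (k : ℕ), n < k → (b (e k) : W) ∈ Ws ⟨n⟩ := by
    intro n k hk
    refine Submodule.subset_span ⟨e k, fun k' hk' => ?_, rfl⟩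
    intro hkk
    have h1 := e.injective hkk
    have h2 : k' ≤ n := hk'
    omega
  have hfip : ∀ s : Finset (ULift.{w} ℕ), (⋂ i ∈ s, (vv i +ᵥ (Ws i : Set W))).Nonempty := by
    intro s
    set N := s.sup fun i => i.down with hN
    refine ⟨vv ⟨N⟩, Set.mem_iInter₂.2 fun n hn => mem_vadd_submodule.2 ?_⟩
    have hnN : n.down ≤ N := Finset.le_sup (f := fun i : ULift ℕ => i.down) hn
    have hsum : vv ⟨N⟩ - vv n = ∑ k ∈ Finset.Ico (n.down + 1) (N + 1), (b (e k) : W) := by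
      rw [hvv]
      show (∑ k ∈ Finset.range (N + 1), (b (e k) : W)) -
          ∑ k ∈ Finset.range (n.down + 1), b (e k) = _
      exact (Finset.sum_Ico_eq_sub _ (by omega)).symm
    rw [hsum]
    refine Submodule.sum_mem _ fun k hk => ?_
    rw [Finset.mem_Ico] at hk
    exact hkey n.down k (by omega)
  obtain ⟨x, hx⟩ := h vv Ws (fun i => isClosed_discrete _) hfip
  have hrep : ∀ n : ℕ, b.repr x (e n) = 1 := by
    intro n
    have hmem := mem_vadd_submodule.1 (Set.mem_iInter.1 hx ⟨n⟩)
    rw [hWs] at hmem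
    have hsupp := (Module.Basis.mem_span_image b).1 hmem
    have hen : e n ∉ (b.repr (x - vv ⟨n⟩)).support := by
      intro hc
      exact (hsupp hc) n le_rfl rfl
    have h0 : b.repr (x - vv ⟨n⟩) (e n) = 0 := Finsupp.notMem_support_iff.1 hen
    rw [map_sub, Finsupp.sub_apply, sub_eq_zero] at h0
    rw [h0, hvv]
    simp only [map_sum, Finsupp.coe_finset_sum, Finset.sum_apply]
    rw [Finset.sum_eq_single n]
    · simp [Module.Basis.repr_self]
    · intro k _ hkn
      rw [Module.Basis.repr_self, Finsupp.single_apply, if_neg (fun hc => hkn (e.injective hc))]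
    · intro hc; simp at hc
  have hsub : Set.range (fun n : ℕ => (e n : Module.Basis.ofVectorSpaceIndex K W)) ⊆
      ↑((b.repr x).support.image fun j => j) := by
    rintro _ ⟨n, rfl⟩
    simp only [Finset.coe_image, Set.mem_image, Finset.mem_coe, Finsupp.mem_support_iff]
    exact ⟨e n, by rw [hrep n]; exact ⟨one_ne_zero, rfl⟩⟩
  exact (Set.infinite_range_of_injective e.injective)
    (Set.Finite.subset (Finset.finite_toSet _) hsub)

variable {V : Type*} [AddCommGroup V] [Module K V] (φ : V →ₗ[K] V) (U : Submodule K V)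

lemma traj_eq_finsetSup (n : ℕ) :
    Traj K φ U n = (Finset.range n).sup fun i => U.map (φ ^ i) :=
  (Finset.sup_eq_iSup _ _).symm

lemma traj_finiteDimensional [FiniteDimensional K ↥U] (n : ℕ) :
    FiniteDimensional K ↥(Traj K φ U n) := by
  rw [traj_eq_finsetSup]
  infer_instance

lemma le_traj {n : ℕ} (hn : 1 ≤ n) : U ≤ Traj K φ U n := by
  have : U.map (φ ^ 0) ≤ Traj K φ U n :=
    traj_eq_finsetSup φ U n ▸ Finset.le_sup (f := fun i => U.map (φ ^ i)) (Finset.mem_range.2 hn)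
  simpa [Module.End.one_eq_id, Submodule.map_id] using this

lemma traj_add_le (m n : ℕ) :
    Traj K φ U (m + n) ≤ Traj K φ U m ⊔ (Traj K φ U n).map (φ ^ m) := by
  refine iSup₂_le fun i hi => ?_
  rw [Finset.mem_range] at hi
  rcases lt_or_ge i m with h | h
  · exact le_sup_of_le_left (traj_eq_finsetSup φ U m ▸
      Finset.le_sup (f := fun i => U.map (φ ^ i)) (Finset.mem_range.2 h))
  · obtain ⟨j, rfl⟩ := Nat.exists_eq_add_of_le h
    have hj : j < n := by omega
    refine le_sup_of_le_right ?_
    rw [pow_add, Module.End.mul_eq_comp, Submodule.map_comp]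
    exact Submodule.map_mono (traj_eq_finsetSup φ U n ▸
      Finset.le_sup (f := fun i => U.map (φ ^ i)) (Finset.mem_range.2 hj))

lemma traj_limits [FiniteDimensional K ↥U] :
    ∃ L : ℝ,
      Tendsto (fun n : ℕ => (Module.finrank K ↥(Traj K φ U n) : ℝ) / n) atTop (nhds L) ∧
      Tendsto (fun n : ℕ => (Module.finrank K ↥((Traj K φ U n).map U.mkQ) : ℝ) / n)
        atTop (nhds L) := by
  haveI : ∀ n, FiniteDimensional K ↥(Traj K φ U n) := traj_finiteDimensional φ U
  set u : ℕ → ℝ := fun n => (Module.finrank K ↥(Traj K φ U n) : ℝ) with hu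
  have hsub : Subadditive u := by
    intro m n
    have h1 : Module.finrank K ↥(Traj K φ U (m + n)) ≤
        Module.finrank K ↥(Traj K φ U m ⊔ (Traj K φ U n).map (φ ^ m)) :=
      Submodule.finrank_mono (traj_add_le φ U m n)
    have h2 := Submodule.finrank_sup_add_finrank_inf_eq (Traj K φ U m)
      ((Traj K φ U n).map (φ ^ m))
    have h3 : Module.finrank K ↥((Traj K φ U n).map (φ ^ m)) ≤
        Module.finrank K ↥(Traj K φ U n) := Submodule.finrank_map_le _ _
    have : Module.finrank K ↥(Traj K φ U (m + n)) ≤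
        Module.finrank K ↥(Traj K φ U m) + Module.finrank K ↥(Traj K φ U n) := by omega
    simp only [hu]
    exact_mod_cast this
  have hbdd : BddBelow (Set.range fun n : ℕ => u n / n) := by
    refine ⟨0, ?_⟩
    rintro x ⟨n, rfl⟩
    positivity
  refine ⟨hsub.lim, hsub.tendsto_lim hbdd, ?_⟩
  have hq : ∀ n : ℕ, 1 ≤ n →
      (Module.finrank K ↥((Traj K φ U n).map U.mkQ) : ℝ) =
        u n - Module.finrank K ↥U := by
    intro n hn
    have hle := le_traj φ U hn
    set f : ↥(Traj K φ U n) →ₗ[K] V ⧸ U := U.mkQ.comp (Traj K φ U n).subtype with hf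
    have hrange : LinearMap.range f = (Traj K φ U n).map U.mkQ := by
      rw [hf, LinearMap.range_comp, Submodule.range_subtype]
    have hker : LinearMap.ker f = Submodule.comap (Traj K φ U n).subtype U := by
      rw [hf, LinearMap.ker_comp, Submodule.ker_mkQ]
    have hrn := LinearMap.finrank_range_add_finrank_ker f
    rw [hrange, hker] at hrn
    have hcomap : Module.finrank K ↥(Submodule.comap (Traj K φ U n).subtype U) =
        Module.finrank K ↥U :=
      (Submodule.comapSubtypeEquivOfLe hle).finrank_eq
    rw [hcomap] at hrn
    rw [hu]
    push_cast
    have := congrArg (fun x : ℕ => (x : ℝ)) hrn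
    push_cast at this
    linarith
  have hc : Tendsto (fun n : ℕ => (Module.finrank K ↥U : ℝ) / n) atTop (nhds 0) :=
    tendsto_const_div_atTop_nhds_zero_nat _
  have htend : Tendsto (fun n : ℕ => u n / n - (Module.finrank K ↥U : ℝ) / n) atTop
      (nhds hsub.lim) := by
    simpa using (hsub.tendsto_lim hbdd).sub hc
  refine htend.congr' ?_
  filter_upwards [eventually_ge_atTop 1] with n hn
  rw [div_sub_div_same, ← hq n hn]

end Aux


/-- On discrete vector spaces, the algebraic entropy `ent` coincides with the dimension
entropy `ent_dim`. -/
theorem ent_eq_entDim_of_discrete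
    {K : Type*} [Field K] {V : Type v} [AddCommGroup V] [Module K V]
    [TopologicalSpace V] [DiscreteTopology V] (φ : V →ₗ[K] V) :
    ent K φ =
      ⨆ F ∈ {F : Submodule K V | FiniteDimensional K ↥F},
        ENNReal.ofReal (limUnder atTop
          fun n : ℕ => (Module.finrank K ↥(Traj K φ F n) : ℝ) / n) := by
  have hset : LCO K V = {F : Submodule K V | FiniteDimensional K ↥F} := by
    ext U
    constructor
    · rintro ⟨-, h⟩
      exact finiteDimensional_of_isLinearlyCompact h
    · intro hU
      haveI : FiniteDimensional K ↥U := hU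
      exact ⟨isOpen_discrete _, isLinearlyCompact_of_finiteDimensional⟩
  rw [ent, hset]
  refine iSup_congr fun F => iSup_congr fun hF => ?_
  haveI : FiniteDimensional K ↥F := hF
  obtain ⟨L, h1, h2⟩ := traj_limits φ F
  have hA : entH K φ F = L := h2.limUnder_eq
  have hB : (limUnder atTop
      fun n : ℕ => (Module.finrank K ↥(Traj K φ F n) : ℝ) / n) = L := h1.limUnder_eq
  rw [hA, hB]
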